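/- Let ∇ ⊂ ℝ³ be the polytope defined by 0 ≤ x,y,z ≤ 1, x+y-z ≥ 0, 1-x-y+z ≥ 0. For every positive integer n, the number of lattice points in n∇ equals C(n+3,3) + 2·C(n+2,3) + C(n+1,3) = (4n³ + 12n² + 14n + 6)/6. -/

import Mathlib

/-!
A lattice point of `n∇` is a triple `(a, b, c) ∈ [0, n]³` with `c ≤ a + b ≤ c + n`. For fixed
`(a, b)` there are `n + 1 - |a + b - n|` admissible `c`, and the reflection `b ↦ n - b` turns the
defect `|a + b - n|` into `|a - b|`. Since `∑_{a, b ≤ n} |a - b| = 2·C(n+2,3)`, the count is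
`(n+1)³ - 2·C(n+2,3)`, which is the claimed sum by Worpitzky's identity
`(n+1)³ = C(n+3,3) + 4·C(n+2,3) + C(n+1,3)`.
-/

open Pointwise

def nabla : Set (ℝ × ℝ × ℝ) :=
  {p : ℝ × ℝ × ℝ |
    0 ≤ p.1 ∧
    p.1 ≤ 1 ∧
    0 ≤ p.2.1 ∧
    p.2.1 ≤ 1 ∧
    0 ≤ p.2.2 ∧
    p.2.2 ≤ 1 ∧
    0 ≤ p.1 + p.2.1 - p.2.2 ∧
    0 ≤ 1 - p.1 - p.2.1 + p.2.2}

open Finset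

theorem mem_smul_nabla {t : ℝ} (ht : 0 ≤ t) (p : ℝ × ℝ × ℝ) :
    p ∈ t • nabla ↔ 0 ≤ p.1 ∧ p.1 ≤ t ∧ 0 ≤ p.2.1 ∧ p.2.1 ≤ t ∧ 0 ≤ p.2.2 ∧ p.2.2 ≤ t ∧
      0 ≤ p.1 + p.2.1 - p.2.2 ∧ p.1 + p.2.1 - p.2.2 ≤ t := by
  obtain ⟨x, y, z⟩ := p
  rcases ht.eq_or_lt with rfl | ht
  · have : nabla.Nonempty := ⟨0, by simp [nabla]⟩
    simp only [Set.zero_smul_set this, Set.mem_zero, Prod.ext_iff, Prod.fst_zero, Prod.snd_zero]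
    constructor
    · rintro ⟨rfl, rfl, rfl⟩
      norm_num
    · rintro ⟨hx, hx', hy, hy', hz, hz', -, -⟩
      exact ⟨hx'.antisymm hx, hy'.antisymm hy, hz'.antisymm hz⟩
  · rw [Set.mem_smul_set_iff_inv_smul_mem₀ ht.ne']
    have hsum : t⁻¹ * x + t⁻¹ * y - t⁻¹ * z = t⁻¹ * (x + y - z) := by ring
    have hcosum : 1 - t⁻¹ * x - t⁻¹ * y + t⁻¹ * z = t⁻¹ * (t - (x + y - z)) := by
      field_simp
      ring
    simp only [nabla, Set.mem_ofPred_eq, Prod.smul_fst, Prod.smul_snd, smul_eq_mul]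
    rw [hsum, hcosum]
    simp only [mul_nonneg_iff_of_pos_left (inv_pos.2 ht), inv_mul_le_one₀ ht, sub_nonneg]

def latticePoints (n : ℕ) : Finset (ℕ × ℕ × ℕ) :=
  {p ∈ range (n + 1) ×ˢ range (n + 1) ×ˢ range (n + 1) |
    p.2.2 ≤ p.1 + p.2.1 ∧ p.1 + p.2.1 ≤ p.2.2 + n}

theorem intPoints_smul_nabla_eq_image (n : ℕ) :
    {v : ℤ × ℤ × ℤ | (((v.1 : ℝ), (v.2.1 : ℝ), (v.2.2 : ℝ)) : ℝ × ℝ × ℝ) ∈ (n : ℝ) • nabla}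
      = Prod.map Nat.cast (Prod.map Nat.cast Nat.cast) '' (latticePoints n : Set (ℕ × ℕ × ℕ)) := by
  ext ⟨x, y, z⟩
  simp only [Set.mem_ofPred_eq, mem_smul_nabla (Nat.cast_nonneg n), Set.mem_image, mem_coe,
    latticePoints, mem_filter, mem_product, mem_range, Prod.exists, Prod.map, Prod.mk.injEq]
  norm_cast
  constructor
  · rintro ⟨hx, hx', hy, hy', hz, hz', h, h'⟩
    lift x to ℕ using hx
    lift y to ℕ using hy
    lift z to ℕ using hz
    exact ⟨x, y, z, ⟨⟨by omega, by omega, by omega⟩, by omega, by omega⟩, rfl, rfl, rfl⟩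
  · rintro ⟨a, b, c, h, rfl, rfl, rfl⟩
    omega

theorem ncard_intPoints_smul_nabla (n : ℕ) :
    {v : ℤ × ℤ × ℤ | (((v.1 : ℝ), (v.2.1 : ℝ), (v.2.2 : ℝ)) : ℝ × ℝ × ℝ) ∈ (n : ℝ) • nabla}.ncard
      = #(latticePoints n) := by
  rw [intPoints_smul_nabla_eq_image, Set.ncard_image_of_injective _
    (Nat.cast_injective.prodMap (Nat.cast_injective.prodMap Nat.cast_injective)),
    Set.ncard_coe_finset]

theorem card_filter_le_le_add (n s : ℕ) :
    #{c ∈ range (n + 1) | c ≤ s ∧ s ≤ c + n} = n + 1 - s.dist n := by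
  have : {c ∈ range (n + 1) | c ≤ s ∧ s ≤ c + n} = Icc (s - n) (min s n) := by
    ext c
    simp only [mem_filter, mem_range, mem_Icc]
    omega
  rw [this, Nat.card_Icc, Nat.dist]
  omega

theorem card_latticePoints (n : ℕ) :
    #(latticePoints n) = ∑ a ∈ range (n + 1), ∑ b ∈ range (n + 1), (n + 1 - a.dist b) := by
  rw [latticePoints, card_filter, sum_product]
  refine sum_congr rfl fun a ha => ?_
  rw [sum_product, ← sum_range_reflect]
  refine sum_congr rfl fun b hb => ?_
  rw [← card_filter]
  dsimp only
  rw [card_filter_le_le_add]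
  simp only [mem_range] at ha hb
  simp only [Nat.dist]
  omega

theorem Nat.sum_range_dist_right (m : ℕ) : ∑ a ∈ range m, a.dist m = (m + 1).choose 2 := by
  induction m with
  | zero => rfl
  | succ m ih =>
    have : ∀ a ∈ range m, a.dist (m + 1) = a.dist m + 1 := by
      intro a ha
      simp only [mem_range] at ha
      simp only [Nat.dist]
      omega
    rw [sum_range_succ, sum_congr rfl this, sum_add_distrib, sum_const, card_range, smul_eq_mul,
      Nat.choose_succ_succ' (m + 1) 1, Nat.choose_one_right, ← ih, Nat.dist]
    omega

theorem Nat.sum_range_sum_range_dist (m : ℕ) :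
    ∑ a ∈ range m, ∑ b ∈ range m, a.dist b = 2 * (m + 1).choose 3 := by
  induction m with
  | zero => rfl
  | succ m ih =>
    simp only [sum_range_succ, sum_add_distrib, ih, Nat.dist_self, add_zero]
    simp only [Nat.dist_comm m, Nat.sum_range_dist_right, Nat.choose_succ_succ' (m + 1) 2]
    ring

theorem card_latticePoints_add_two_mul_choose (n : ℕ) :
    #(latticePoints n) + 2 * (n + 2).choose 3 = (n + 1) ^ 3 := by
  rw [card_latticePoints, ← Nat.sum_range_sum_range_dist, ← sum_add_distrib]
  have hrow : ∀ a ∈ range (n + 1),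
      ∑ b ∈ range (n + 1), (n + 1 - a.dist b) + ∑ b ∈ range (n + 1), a.dist b = (n + 1) ^ 2 := by
    intro a ha
    have : ∀ b ∈ range (n + 1), n + 1 - a.dist b + a.dist b = n + 1 := by
      intro b hb
      simp only [mem_range] at ha hb
      simp only [Nat.dist]
      omega
    rw [← sum_add_distrib, sum_congr rfl this, sum_const, card_range, smul_eq_mul, sq]
  rw [sum_congr rfl hrow, sum_const, card_range, smul_eq_mul]
  ring

theorem Nat.cast_choose_three (K : Type*) [DivisionRing K] [CharZero K] (a : ℕ) :
    (a.choose 3 : K) = a * (a - 1) * (a - 2) / 6 := by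
  rw [Nat.cast_choose_eq_descPochhammer_div]
  simp [descPochhammer_succ_eval, Nat.factorial]

theorem Nat.succ_pow_three_eq_choose (m : ℕ) :
    (m + 1) ^ 3 = (m + 3).choose 3 + 4 * (m + 2).choose 3 + (m + 1).choose 3 := by
  have : ((m + 1) ^ 3 : ℚ) = (m + 3).choose 3 + 4 * (m + 2).choose 3 + (m + 1).choose 3 := by
    simp only [Nat.cast_choose_three]
    push_cast
    ring
  exact_mod_cast this

theorem stmt5_general (n : ℕ) :
    {v : ℤ × ℤ × ℤ | (((v.1 : ℝ), (v.2.1 : ℝ), (v.2.2 : ℝ)) : ℝ × ℝ × ℝ) ∈ (n : ℝ) • nabla}.ncard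
        = Nat.choose (n + 3) 3 + 2 * Nat.choose (n + 2) 3 + Nat.choose (n + 1) 3 ∧
      ((Nat.choose (n + 3) 3 + 2 * Nat.choose (n + 2) 3 + Nat.choose (n + 1) 3 : ℚ))
        = (4 * (n : ℚ) ^ 3 + 12 * (n : ℚ) ^ 2 + 14 * (n : ℚ) ^ 1 + 6) / 6 := by
  refine ⟨?_, ?_⟩
  · have hcount := card_latticePoints_add_two_mul_choose n
    have hworpitzky := Nat.succ_pow_three_eq_choose n
    rw [ncard_intPoints_smul_nabla]
    omega
  · simp only [Nat.cast_choose_three]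
    push_cast
    ring

theorem stmt5 (n : ℕ) (hn : 0 < n) :
    {v : ℤ × ℤ × ℤ | (((v.1 : ℝ), (v.2.1 : ℝ), (v.2.2 : ℝ)) : ℝ × ℝ × ℝ) ∈ (n : ℝ) • nabla}.ncard
        = Nat.choose (n + 3) 3 + 2 * Nat.choose (n + 2) 3 + Nat.choose (n + 1) 3 ∧
      ((Nat.choose (n + 3) 3 + 2 * Nat.choose (n + 2) 3 + Nat.choose (n + 1) 3 : ℚ))
        = (4 * (n : ℚ) ^ 3 + 12 * (n : ℚ) ^ 2 + 14 * (n : ℚ) ^ 1 + 6) / 6 :=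
  stmt5_general n
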